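/- Exton's general transformation: for parameters p, p' (not nonpositive integers) and formal power series variables x, s, y, t, Σ_{m,n≥0} ((d)_{m+n} x^m s^n / ((g)_{m+n} m! n!)) · ₁F₁(-m; p; -y) · ₁F₁(-n; p'; -t) = Σ_{m,n≥0} ((d)_{m+n} (xy)^m (st)^n / ((g)_{m+n} (p)_m (p')_n m! n!)) · Σ_{u,v≥0} ((d+m+n)_{u+v} / (g+m+n)_{u+v}) · x^u s^v / (u! v!), where (d) and (g) are single parameters d and g (the case D = G = 1), assuming all series converge absolutely. -/

import Mathlib

/-- Pochhammer symbol `(a)_n`. -/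
noncomputable def poch (a : ℝ) (n : ℕ) : ℝ := Polynomial.eval a (ascPochhammer ℝ n)

/-- Terminating confluent hypergeometric sum `₁F₁(-n; b; x)`. -/
noncomputable def F11 (n : ℕ) (b x : ℝ) : ℝ :=
  ∑ k ∈ Finset.range (n + 1), poch (-(n : ℝ)) k * x ^ k / (poch b k * k.factorial)

/-- Term of the left-hand double series in Exton's transformation. -/
noncomputable def extonLHS (d g p p' x s y t : ℝ) (mn : ℕ × ℕ) : ℝ :=
  poch d (mn.1 + mn.2) * x ^ mn.1 * s ^ mn.2 /
      (poch g (mn.1 + mn.2) * mn.1.factorial * mn.2.factorial) *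
    F11 mn.1 p (-y) * F11 mn.2 p' (-t)

/-- Term of the right-hand double series in Exton's transformation, with the inner
double series `Σ_{u,v} (d+m+n)_{u+v}/(g+m+n)_{u+v} x^u s^v/(u! v!)`. -/
noncomputable def extonRHS (d g p p' x s y t : ℝ) (mn : ℕ × ℕ) : ℝ :=
  poch d (mn.1 + mn.2) * (x * y) ^ mn.1 * (s * t) ^ mn.2 /
      (poch g (mn.1 + mn.2) * poch p mn.1 * poch p' mn.2 *
        mn.1.factorial * mn.2.factorial) *
    ∑' uv : ℕ × ℕ,
      poch (d + mn.1 + mn.2) (uv.1 + uv.2) / poch (g + mn.1 + mn.2) (uv.1 + uv.2) *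
        x ^ uv.1 * s ^ uv.2 / (uv.1.factorial * uv.2.factorial)

/-!
Both sides are regroupings of the four-index family
`c(j,u,k,v) = (d)_N/(g)_N · (xy)^j/((p)_j j!) · x^u/u! · (st)^k/((p')_k k!) · s^v/v!`,
`N = j + u + k + v`. Summing over `j + u = m`, `k + v = n` gives the left-hand term, since
`(-m)_j (-y)^j = m!/(m-j)! · y^j`; summing over `(u, v)` for fixed `(j, k)` gives the right-hand
term, since `(d)_{j+k+u+v} = (d)_{j+k} (d+j+k)_{u+v}`. The family is absolutely summable with no
convergence hypothesis: `(d)_N/(g)_N` and `1/(p)_j` grow at most geometrically, so `c` is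
dominated by a product of four exponential series.
-/

open Finset

lemma poch_zero (a : ℝ) : poch a 0 = 1 := by simp [poch]

lemma poch_succ (a : ℝ) (n : ℕ) : poch a (n + 1) = poch a n * (a + n) :=
  ascPochhammer_succ_eval n a

lemma poch_add (a : ℝ) (m n : ℕ) : poch a (m + n) = poch a m * poch (a + m) n := by
  simp [poch, ← ascPochhammer_mul, Polynomial.eval_comp]

lemma poch_one (n : ℕ) : poch 1 n = n.factorial := ascPochhammer_eval_one ℝ n

lemma poch_neg_natCast (n j : ℕ) : poch (-(n : ℝ)) j = (-1) ^ j * n.descFactorial j := by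
  rw [poch, ascPochhammer_eval_neg_eq_descPochhammer, descPochhammer_eval_eq_descFactorial]

lemma add_natCast_ne_zero_of_poch_ne_zero {g : ℝ} (hg : ∀ k : ℕ, poch g k ≠ 0) (n : ℕ) :
    g + n ≠ 0 :=
  right_ne_zero_of_mul (poch_succ g n ▸ hg (n + 1))

lemma exists_abs_add_natCast_le_mul (d : ℝ) {g : ℝ} (hg : ∀ n : ℕ, g + n ≠ 0) :
    ∃ K, 0 ≤ K ∧ ∀ n : ℕ, |d + n| ≤ K * |g + n| := by
  have hlim : Filter.Tendsto (fun n : ℕ => |g + n|⁻¹) Filter.atTop (nhds 0) :=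
    tendsto_inv_atTop_zero.comp <| Filter.tendsto_abs_atTop_atTop.comp <|
      Filter.tendsto_atTop_add_const_left _ g tendsto_natCast_atTop_atTop
  obtain ⟨B, hB⟩ := hlim.bddAbove_range
  refine ⟨|d - g| * max B 0 + 1, by positivity, fun n => ?_⟩
  have hpos : 0 < |g + n| := abs_pos.2 (hg n)
  have hinv : |g + n|⁻¹ ≤ max B 0 := (hB ⟨n, rfl⟩).trans (le_max_left _ _)
  calc |d + n| = |d - g + (g + n)| := by ring_nf
    _ ≤ |d - g| + |g + n| := abs_add_le _ _
    _ = (|d - g| * |g + n|⁻¹ + 1) * |g + n| := by field_simp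
    _ ≤ (|d - g| * max B 0 + 1) * |g + n| := by gcongr

lemma exists_abs_poch_le_pow_mul (d : ℝ) {g : ℝ} (hg : ∀ k : ℕ, poch g k ≠ 0) :
    ∃ K : NNReal, ∀ n : ℕ, |poch d n| ≤ K ^ n * |poch g n| := by
  obtain ⟨K, hK0, hK⟩ :=
    exists_abs_add_natCast_le_mul d (add_natCast_ne_zero_of_poch_ne_zero hg)
  lift K to NNReal using hK0
  refine ⟨K, fun n => ?_⟩
  induction n with
  | zero => simp [poch_zero]
  | succ n ih =>
    calc |poch d (n + 1)| = |poch d n| * |d + n| := by rw [poch_succ, abs_mul]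
      _ ≤ K ^ n * |poch g n| * (K * |g + n|) := by gcongr; exact hK n
      _ = K ^ (n + 1) * |poch g (n + 1)| := by rw [poch_succ, abs_mul]; ring

lemma exists_one_le_pow_mul_abs_poch {p : ℝ} (hp : ∀ k : ℕ, poch p k ≠ 0) :
    ∃ L : NNReal, ∀ j : ℕ, 1 ≤ L ^ j * |poch p j| := by
  obtain ⟨L, hL⟩ := exists_abs_poch_le_pow_mul 1 hp
  refine ⟨L, fun j => le_trans ?_ (hL j)⟩
  rw [poch_one, Nat.abs_cast]
  exact Nat.one_le_cast.2 j.factorial_pos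

section Antidiagonal

variable {A B α : Type*} [AddMonoid A] [HasAntidiagonal A] [AddMonoid B] [HasAntidiagonal B]

def Finset.HasAntidiagonal.sigmaAntidiagonalProdEquiv :
    (Σ n : A × B, (antidiagonal n.1 ×ˢ antidiagonal n.2 : Finset _)) ≃ (A × A) × (B × B) where
  toFun x := x.2
  invFun q := ⟨(q.1.1 + q.1.2, q.2.1 + q.2.2), q, by simp⟩
  left_inv := by
    rintro ⟨n, q, hq⟩
    simp only [mem_product, mem_antidiagonal] at hq
    exact Sigma.subtype_ext (Prod.ext hq.1 hq.2) rfl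
  right_inv _ := rfl

theorem HasSum.sum_antidiagonal_prod [AddCommMonoid α] [TopologicalSpace α] [ContinuousAdd α]
    [RegularSpace α] {f : (A × A) × (B × B) → α} {a : α} (hf : HasSum f a) :
    HasSum (fun n : A × B => ∑ q ∈ antidiagonal n.1 ×ˢ antidiagonal n.2, f q) a :=
  (HasAntidiagonal.sigmaAntidiagonalProdEquiv.hasSum_iff.2 hf).sigma fun n =>
    (antidiagonal n.1 ×ˢ antidiagonal n.2).hasSum f

end Antidiagonal

section Exton

variable (d g p p' x s y t : ℝ)

noncomputable def extonTerm (q : (ℕ × ℕ) × (ℕ × ℕ)) : ℝ :=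
  poch d (q.1.1 + q.1.2 + (q.2.1 + q.2.2)) / poch g (q.1.1 + q.1.2 + (q.2.1 + q.2.2)) *
    ((x * y) ^ q.1.1 / (poch p q.1.1 * q.1.1.factorial)) * (x ^ q.1.2 / q.1.2.factorial) *
    ((s * t) ^ q.2.1 / (poch p' q.2.1 * q.2.1.factorial)) * (s ^ q.2.2 / q.2.2.factorial)

variable {d g p p' x s y t}

lemma abs_pow_div_poch_mul_factorial_le {L : ℝ} (hL : ∀ j : ℕ, 1 ≤ L ^ j * |poch p j|)
    (z : ℝ) (j : ℕ) :
    |z ^ j / (poch p j * j.factorial)| ≤ (L * |z|) ^ j / j.factorial := by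
  have hP : 0 < |poch p j| := abs_pos.2 fun h => by
    have := hL j
    norm_num [h] at this
  rw [abs_div, abs_mul, Nat.abs_cast, abs_pow, mul_pow,
    div_le_div_iff₀ (by positivity) (by positivity)]
  have := mul_le_mul_of_nonneg_left (hL j) (by positivity : 0 ≤ |z| ^ j * j.factorial)
  linarith

lemma summable_pow_div_factorial_mul_pow_div_factorial {a b : ℝ} (ha : 0 ≤ a) (hb : 0 ≤ b) :
    Summable fun q : ℕ × ℕ => a ^ q.1 / q.1.factorial * (b ^ q.2 / q.2.factorial) :=
  (Real.summable_pow_div_factorial a).mul_of_nonneg (Real.summable_pow_div_factorial b)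
    (fun _ => by positivity) (fun _ => by positivity)

lemma summable_extonTerm (hp : ∀ k : ℕ, poch p k ≠ 0) (hp' : ∀ k : ℕ, poch p' k ≠ 0)
    (hg : ∀ k : ℕ, poch g k ≠ 0) : Summable (extonTerm d g p p' x s y t) := by
  obtain ⟨K, hK⟩ := exists_abs_poch_le_pow_mul d hg
  obtain ⟨L, hL⟩ := exists_one_le_pow_mul_abs_poch hp
  obtain ⟨L', hL'⟩ := exists_one_le_pow_mul_abs_poch hp'
  refine .of_norm_bounded
    ((summable_pow_div_factorial_mul_pow_div_factorial (a := K * (L * |x * y|)) (b := K * |x|)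
      (by positivity) (by positivity)).mul_of_nonneg
    (summable_pow_div_factorial_mul_pow_div_factorial (a := K * (L' * |s * t|)) (b := K * |s|)
      (by positivity) (by positivity))
    (fun _ => by positivity) (fun _ => by positivity)) ?_
  rintro ⟨⟨j, u⟩, k, v⟩
  rw [Real.norm_eq_abs, extonTerm, abs_mul, abs_mul, abs_mul, abs_mul]
  calc _ ≤ K ^ (j + u + (k + v)) * ((L * |x * y|) ^ j / j.factorial) *
          (|x| ^ u / u.factorial) * ((L' * |s * t|) ^ k / k.factorial) *
          (|s| ^ v / v.factorial) := by
        gcongr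
        · rw [abs_div, div_le_iff₀ (abs_pos.2 (hg _))]
          exact hK _
        · exact abs_pow_div_poch_mul_factorial_le hL _ _
        · rw [abs_div, abs_pow, Nat.abs_cast]
        · exact abs_pow_div_poch_mul_factorial_le hL' _ _
        · rw [abs_div, abs_pow, Nat.abs_cast]
    _ = _ := by simp only [mul_pow, pow_add]; ring

lemma F11_neg_eq_sum_antidiagonal (m : ℕ) (b z : ℝ) :
    F11 m b (-z) = ∑ ju ∈ antidiagonal m,
      m.factorial / ju.2.factorial * (z ^ ju.1 / (poch b ju.1 * ju.1.factorial)) := by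
  rw [F11, Nat.sum_antidiagonal_eq_sum_range_succ
    (fun j u => m.factorial / u.factorial * (z ^ j / (poch b j * j.factorial)))]
  refine sum_congr rfl fun j hj => ?_
  have hdesc : (m.descFactorial j : ℝ) = m.factorial / (m - j).factorial := by
    rw [eq_div_iff (by positivity), mul_comm]
    exact_mod_cast Nat.factorial_mul_descFactorial (Nat.lt_succ_iff.1 (mem_range.1 hj))
  have hsign : ((-1 : ℝ) ^ j) * (-1) ^ j = 1 := by rw [← mul_pow]; norm_num
  rw [poch_neg_natCast, neg_pow z, hdesc]
  linear_combination (m.factorial / (m - j).factorial * (z ^ j / (poch b j * j.factorial))) * hsign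

lemma sum_antidiagonal_extonTerm (mn : ℕ × ℕ) :
    ∑ q ∈ antidiagonal mn.1 ×ˢ antidiagonal mn.2, extonTerm d g p p' x s y t q =
      extonLHS d g p p' x s y t mn := by
  rw [extonLHS, F11_neg_eq_sum_antidiagonal, F11_neg_eq_sum_antidiagonal, mul_assoc,
    sum_mul_sum, sum_product]
  simp only [mul_sum]
  refine sum_congr rfl fun ⟨j, u⟩ hju => sum_congr rfl fun ⟨k, v⟩ hkv => ?_
  obtain ⟨m, n⟩ := mn
  rw [HasAntidiagonal.mem_antidiagonal] at hju hkv
  subst hju hkv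
  simp only [extonTerm]
  field_simp
  ring

lemma tsum_extonTerm_prodProdProdComm (jk : ℕ × ℕ) :
    ∑' uv : ℕ × ℕ, extonTerm d g p p' x s y t (Equiv.prodProdProdComm ℕ ℕ ℕ ℕ (jk, uv)) =
      extonRHS d g p p' x s y t jk := by
  obtain ⟨j, k⟩ := jk
  rw [extonRHS, ← tsum_mul_left]
  refine tsum_congr fun ⟨u, v⟩ => ?_
  simp only [extonTerm, Equiv.prodProdProdComm_apply]
  rw [add_add_add_comm, poch_add d (j + k), poch_add g (j + k), Nat.cast_add, ← add_assoc,
    ← add_assoc]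
  ring

end Exton

theorem exton_general_transformation_general (d g p p' x s y t : ℝ)
    (hp : ∀ k : ℕ, poch p k ≠ 0) (hp' : ∀ k : ℕ, poch p' k ≠ 0)
    (hg : ∀ k : ℕ, poch g k ≠ 0) :
    ∑' mn : ℕ × ℕ, extonLHS d g p p' x s y t mn =
      ∑' mn : ℕ × ℕ, extonRHS d g p p' x s y t mn := by
  have hF : HasSum (extonTerm d g p p' x s y t) _ := (summable_extonTerm hp hp' hg).hasSum
  have hL := hF.sum_antidiagonal_prod
  simp only [sum_antidiagonal_extonTerm] at hL
  have hF' := (Equiv.prodProdProdComm ℕ ℕ ℕ ℕ).hasSum_iff.2 hF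
  have hR : HasSum (extonRHS d g p p' x s y t) _ := hF'.prod_fiberwise fun jk => by
    have hfib := (hF'.summable.prod_factor jk).hasSum
    rwa [Function.comp_def, tsum_extonTerm_prodProdProdComm] at hfib
  rw [hL.tsum_eq, hR.tsum_eq]

theorem exton_general_transformation (d g p p' x s y t : ℝ)
    (hp : ∀ k : ℕ, poch p k ≠ 0) (hp' : ∀ k : ℕ, poch p' k ≠ 0)
    (hg : ∀ k : ℕ, poch g k ≠ 0)
    (hg' : ∀ m n k : ℕ, poch (g + m + n) k ≠ 0)
    (hinner : ∀ m n : ℕ, Summable fun uv : ℕ × ℕ =>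
      poch (d + m + n) (uv.1 + uv.2) / poch (g + m + n) (uv.1 + uv.2) *
        x ^ uv.1 * s ^ uv.2 / (uv.1.factorial * uv.2.factorial))
    (hL : Summable (extonLHS d g p p' x s y t))
    (hR : Summable (extonRHS d g p p' x s y t)) :
    ∑' mn : ℕ × ℕ, extonLHS d g p p' x s y t mn =
      ∑' mn : ℕ × ℕ, extonRHS d g p p' x s y t mn :=
  exton_general_transformation_general d g p p' x s y t hp hp' hg
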